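/- Let n ≥ 1 and α, β > 0. Let L_{α,β,n} denote the set of spring-mass systems of size n with positive masses and positive spring constants satisfying K_1/√(m_1) = α and K_{n+1}/√(m_n) = β. Then the map sending a spring-mass system in L_{α,β,n} to its associated matrix H = M^{-1/2} B M^{-1/2} is a bijection from L_{α,β,n} onto T_{A,n}. -/

import Mathlib

open Matrix

/-- The stiffness matrix of a spring-mass system with spring constants `K 0, …, K n`
(`n × n`, tridiagonal, with `B j j = K j + K (j+1)` and off-diagonal entries `-K (j+1)`). -/
noncomputable def stiffB (n : ℕ) (K : Fin (n + 1) → ℝ) : Matrix (Fin n) (Fin n) ℝ :=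
  Matrix.of fun i j =>
    if (i : ℕ) = (j : ℕ) then K i.castSucc + K i.succ
    else if (i : ℕ) + 1 = (j : ℕ) then -K i.succ
    else if (j : ℕ) + 1 = (i : ℕ) then -K j.succ
    else 0

/-- The associated matrix `H = M^{-1/2} B M^{-1/2}` of a spring-mass system with
masses `m` and spring constants `K`. -/
noncomputable def assocH (n : ℕ) (m : Fin n → ℝ) (K : Fin (n + 1) → ℝ) :
    Matrix (Fin n) (Fin n) ℝ :=
  Matrix.diagonal (fun i => (Real.sqrt (m i))⁻¹) * stiffB n K *
    Matrix.diagonal (fun i => (Real.sqrt (m i))⁻¹)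

/-- A matrix is tridiagonal: entries vanish when the indices differ by more than one. -/
def IsTridiagonal {n : ℕ} (H : Matrix (Fin n) (Fin n) ℝ) : Prop :=
  ∀ i j : Fin n, ((i : ℕ) + 1 < (j : ℕ) ∨ (j : ℕ) + 1 < (i : ℕ)) → H i j = 0

/-- The set `T_{A,n}`: real symmetric tridiagonal matrices with negative sub- and
super-diagonal entries which are positive definite. -/
def MemTA {n : ℕ} (H : Matrix (Fin n) (Fin n) ℝ) : Prop :=
  H.IsSymm ∧ IsTridiagonal H ∧
    (∀ i j : Fin n, ((i : ℕ) + 1 = (j : ℕ) ∨ (j : ℕ) + 1 = (i : ℕ)) → H i j < 0) ∧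
    H.PosDef

/-!
Writing `B = Eᵀ diag(K) E`, where `E` sends displacements of the masses to elongations of the
springs, shows that `B`, hence `H = M^{-1/2} B M^{-1/2}`, is positive definite. All rows of `B`
sum to zero except the first and the last, so every system in `L_{α,β,n}` satisfies
`H √m = α e₁ + β eₙ`. Thus `√m = H⁻¹ (α e₁ + β eₙ)`, and the springs are recovered from the
superdiagonal of `H` and the end conditions; this defines the inverse map on `T_{A,n}`. Its
masses are positive because a positive definite matrix with nonpositive off-diagonal entries is
inverse-positive, and strictly so because the chain of negative off-diagonal entries is connected.
It is a right inverse because a symmetric tridiagonal matrix is determined by its superdiagonal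
and its value on one vector with nonzero entries.
-/

namespace Matrix

variable {ι : Type*} [Fintype ι] {H : Matrix ι ι ℝ} {s : ι → ℝ}

theorem nonneg_of_posDef_of_mulVec_nonneg (hH : H.PosDef) (hoff : ∀ i j, i ≠ j → H i j ≤ 0)
    (hHs : 0 ≤ H *ᵥ s) : 0 ≤ s := by
  -- Test the quadratic form on the negative part `y` of `s`: since `y` and `s - y` have
  -- disjoint supports, `y ⬝ H y = y ⬝ H s - y ⬝ H (s - y) ≤ 0`.
  set y : ι → ℝ := s ⊓ 0
  have hy : y ≤ 0 := inf_le_right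
  have hsy : 0 ≤ s - y := sub_nonneg.2 inf_le_left
  have hdisj : ∀ i, y i * (s - y) i = 0 := fun i => by
    rcases le_total (s i) 0 with h | h <;> simp [y, h]
  have hys : y ⬝ᵥ (H *ᵥ s) ≤ 0 :=
    Finset.sum_nonpos fun i _ => mul_nonpos_of_nonpos_of_nonneg (hy i) (hHs i)
  have hycross : 0 ≤ y ⬝ᵥ (H *ᵥ (s - y)) := by
    refine Finset.sum_nonneg fun i _ => ?_
    rw [mulVec, dotProduct, Finset.mul_sum]
    refine Finset.sum_nonneg fun j _ => ?_
    rcases eq_or_ne i j with rfl | hij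
    · rw [mul_left_comm, hdisj, mul_zero]
    · rw [← mul_assoc]
      exact mul_nonneg (mul_nonneg_of_nonpos_of_nonpos (hy i) (hoff i j hij)) (hsy j)
  have hyy : y ⬝ᵥ (H *ᵥ y) ≤ 0 := by
    rw [show H *ᵥ y = H *ᵥ s - H *ᵥ (s - y) by rw [← mulVec_sub, sub_sub_cancel], dotProduct_sub]
    linarith
  have hy0 : y = 0 := by
    by_contra hne
    simpa using hyy.trans_lt (hH.dotProduct_mulVec_pos hne)
  intro i
  simpa [y] using congrFun hy0 i

theorem mul_eq_zero_of_mulVec_apply_nonneg (hoff : ∀ i j, i ≠ j → H i j ≤ 0) (hs : 0 ≤ s)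
    {i : ι} (hHs : 0 ≤ (H *ᵥ s) i) (hi : s i = 0) (j : ι) : H i j * s j = 0 := by
  have hterm : ∀ j ∈ Finset.univ, H i j * s j ≤ 0 := fun j _ => by
    rcases eq_or_ne i j with rfl | hij
    · rw [hi, mul_zero]
    · exact mul_nonpos_of_nonpos_of_nonneg (hoff i j hij) (hs j)
  exact (Finset.sum_eq_zero_iff_of_nonpos hterm).1 (le_antisymm (Finset.sum_nonpos hterm) hHs) j
    (Finset.mem_univ j)

theorem eq_of_offDiag_eq_of_mulVec_eq [DecidableEq ι] {A B : Matrix ι ι ℝ}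
    (hoff : ∀ i j, i ≠ j → A i j = B i j) (hs : ∀ i, s i ≠ 0) (h : A *ᵥ s = B *ᵥ s) :
    A = B := by
  have hdiag : A - B = diagonal fun i => (A - B) i i := by
    ext i j
    rcases eq_or_ne i j with rfl | hij
    · simp
    · simp [hij, hoff i j hij]
  have hzero : (diagonal fun i => (A - B) i i) *ᵥ s = 0 := by
    rw [← hdiag, sub_mulVec, h, sub_self]
  ext i j
  rcases eq_or_ne i j with rfl | hij
  · have hi := congrFun hzero i
    rw [mulVec_diagonal, Pi.zero_apply, Matrix.sub_apply] at hi
    exact sub_eq_zero.1 ((mul_eq_zero.1 hi).resolve_right (hs i))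
  · exact hoff i j hij

end Matrix

lemma Fin.exists_castSucc_eq_and_succ_eq {k : ℕ} {i j : Fin (k + 1)} (h : (i : ℕ) + 1 = j) :
    ∃ l : Fin k, l.castSucc = i ∧ l.succ = j :=
  ⟨⟨i, by omega⟩, rfl, Fin.ext (by simp [← h])⟩

lemma Fin.eq_zero_of_snoc_zero_eq_cons_zero {M : Type*} [Zero M] {n : ℕ} {x : Fin n → M}
    (h : (Fin.snoc x 0 : Fin (n + 1) → M) = Fin.cons 0 x) : x = 0 := by
  have hcons : ∀ j : Fin (n + 1), (Fin.cons 0 x : Fin (n + 1) → M) j = 0 := by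
    intro j
    induction j using Fin.induction with
    | zero => rfl
    | succ i ih => rw [Fin.cons_succ, ← ih, ← h, Fin.snoc_castSucc]
  funext i
  rw [Pi.zero_apply, ← hcons i.castSucc, ← h, Fin.snoc_castSucc]

namespace MemTA

section

variable {n : ℕ} {H : Matrix (Fin n) (Fin n) ℝ}

lemma apply_nonpos (hH : MemTA H) {i j : Fin n} (hij : i ≠ j) : H i j ≤ 0 := by
  have : (i : ℕ) ≠ j := Fin.val_ne_of_ne hij
  by_cases hadj : (i : ℕ) + 1 = j ∨ (j : ℕ) + 1 = i
  · exact (hH.2.2.1 i j hadj).le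
  · exact (hH.2.1 i j (by omega)).le

lemma mulVec_inv_mulVec (hH : MemTA H) (v : Fin n → ℝ) : H *ᵥ (H⁻¹ *ᵥ v) = v := by
  rw [mulVec_mulVec, mul_nonsing_inv _ ((isUnit_iff_isUnit_det H).1 hH.2.2.2.isUnit), one_mulVec]

lemma inv_mulVec_mulVec (hH : MemTA H) (v : Fin n → ℝ) : H⁻¹ *ᵥ (H *ᵥ v) = v := by
  rw [mulVec_mulVec, nonsing_inv_mul _ ((isUnit_iff_isUnit_det H).1 hH.2.2.2.isUnit), one_mulVec]

end

variable {k : ℕ} {H : Matrix (Fin (k + 1)) (Fin (k + 1)) ℝ}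

theorem pos_of_mulVec_nonneg (hH : MemTA H) {s : Fin (k + 1) → ℝ} (hHs : 0 ≤ H *ᵥ s)
    (h0 : 0 < (H *ᵥ s) 0) (i : Fin (k + 1)) : 0 < s i := by
  have hoff : ∀ i j, i ≠ j → H i j ≤ 0 := fun i j => hH.apply_nonpos
  have hs := nonneg_of_posDef_of_mulVec_nonneg hH.2.2.2 hoff hHs
  induction i using Fin.induction with
  | zero =>
    refine (hs 0).lt_of_ne fun hz => h0.ne' ?_
    exact (Finset.sum_eq_zero fun j _ =>
      mul_eq_zero_of_mulVec_apply_nonneg hoff hs (hHs 0) hz.symm j : ∑ j, H 0 j * s j = 0)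
  | succ i ih =>
    refine (hs _).lt_of_ne fun hz => ?_
    have hsub : H i.succ i.castSucc ≠ 0 := (hH.2.2.1 _ _ (Or.inr (by simp))).ne
    exact mul_ne_zero hsub ih.ne'
      (mul_eq_zero_of_mulVec_apply_nonneg hoff hs (hHs _) hz.symm i.castSucc)

theorem eq_of_mulVec_eq {A : Matrix (Fin (k + 1)) (Fin (k + 1)) ℝ} (hA : MemTA A) (hH : MemTA H)
    (hsup : ∀ i : Fin k, A i.castSucc i.succ = H i.castSucc i.succ)
    {s : Fin (k + 1) → ℝ} (hs : ∀ i, s i ≠ 0) (h : A *ᵥ s = H *ᵥ s) : A = H := by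
  refine eq_of_offDiag_eq_of_mulVec_eq (fun i j hij => ?_) hs h
  wlog hlt : i < j generalizing i j
  · rw [← hA.1.apply i j, ← hH.1.apply i j]
    exact this j i hij.symm (hij.lt_or_gt.resolve_left hlt)
  obtain hadj | hfar : (i : ℕ) + 1 = j ∨ (i : ℕ) + 1 < j := by
    have := Fin.lt_def.1 hlt
    omega
  · obtain ⟨l, rfl, rfl⟩ := Fin.exists_castSucc_eq_and_succ_eq hadj
    exact hsup l
  · rw [hA.2.1 i j (Or.inl hfar), hH.2.1 i j (Or.inl hfar)]

end MemTA

def diffMatrix (n : ℕ) : Matrix (Fin (n + 1)) (Fin n) ℝ :=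
  of fun j i => (if j = i.castSucc then 1 else 0) - (if j = i.succ then 1 else 0)

lemma diffMatrix_mulVec (n : ℕ) (x : Fin n → ℝ) :
    diffMatrix n *ᵥ x = Fin.snoc x 0 - Fin.cons 0 x := by
  funext j
  simp only [mulVec, dotProduct, diffMatrix, of_apply, sub_mul, ite_mul, one_mul, zero_mul,
    Finset.sum_sub_distrib, Pi.sub_apply]
  congr 1
  · induction j using Fin.lastCases with
    | last => simp [fun i : Fin n => (Fin.castSucc_lt_last i).ne']
    | cast i => simp [Fin.castSucc_inj]
  · induction j using Fin.cases with
    | zero => simp [fun i : Fin n => (Fin.succ_ne_zero i).symm]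
    | succ i => simp

lemma diffMatrix_mulVec_injective (n : ℕ) : Function.Injective (diffMatrix n).mulVec := by
  intro x y hxy
  have h : diffMatrix n *ᵥ (x - y) = 0 := by rw [mulVec_sub, hxy, sub_self]
  rw [diffMatrix_mulVec, sub_eq_zero] at h
  exact sub_eq_zero.1 (Fin.eq_zero_of_snoc_zero_eq_cons_zero h)

lemma diffMatrix_mulVec_one (n : ℕ) :
    diffMatrix n *ᵥ 1 = Pi.single 0 1 - Pi.single (Fin.last n) 1 := by
  funext j
  have hc := Fin.sum_univ_castSucc fun l => if j = l then (1 : ℝ) else 0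
  have hs := Fin.sum_univ_succ fun l => if j = l then (1 : ℝ) else 0
  simp only [Finset.sum_ite_eq, Finset.mem_univ, if_true] at hc hs
  simp only [mulVec, dotProduct, diffMatrix, of_apply, Pi.one_apply, mul_one,
    Finset.sum_sub_distrib, Pi.sub_apply, Pi.single_apply]
  linarith

lemma transpose_diffMatrix_mulVec (n : ℕ) (v : Fin (n + 1) → ℝ) (i : Fin n) :
    ((diffMatrix n)ᵀ *ᵥ v) i = v i.castSucc - v i.succ := by
  simp [mulVec, dotProduct, diffMatrix, sub_mul, Finset.sum_sub_distrib]

theorem stiffB_eq_transpose_mul_diagonal_mul (n : ℕ) (K : Fin (n + 1) → ℝ) :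
    stiffB n K = (diffMatrix n)ᵀ * diagonal K * diffMatrix n := by
  ext i j
  simp only [mul_apply, transpose_apply, diffMatrix, of_apply, sub_mul, mul_sub, ite_mul, mul_ite,
    one_mul, mul_one, zero_mul, mul_zero, Finset.sum_sub_distrib, Finset.sum_ite_eq',
    Finset.mem_univ, if_true]
  simp only [stiffB, of_apply, diagonal_apply, Fin.ext_iff, Fin.val_castSucc, Fin.val_succ]
  split_ifs <;> first
    | omega
    | ring1
    | (ring_nf; exact congrArg (fun l => -K l) (Fin.ext (by simp; omega) : j.succ = i.castSucc))

lemma stiffB_apply_of_val_add_one_eq {n : ℕ} (K : Fin (n + 1) → ℝ) {i j : Fin n}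
    (h : (i : ℕ) + 1 = j) : stiffB n K i j = -K i.succ := by
  simp [stiffB, h, show (i : ℕ) ≠ j by omega]

lemma isTridiagonal_stiffB (n : ℕ) (K : Fin (n + 1) → ℝ) : IsTridiagonal (stiffB n K) := by
  intro i j h
  simp only [stiffB, of_apply]
  rw [if_neg (by omega), if_neg (by omega), if_neg (by omega)]

theorem posDef_stiffB {n : ℕ} {K : Fin (n + 1) → ℝ} (hK : ∀ j, 0 < K j) :
    (stiffB n K).PosDef := by
  rw [stiffB_eq_transpose_mul_diagonal_mul, ← conjTranspose_eq_transpose_of_trivial]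
  exact (PosDef.diagonal hK).conjTranspose_mul_mul_same (diffMatrix_mulVec_injective n)

def endpointVec (α β : ℝ) (k : ℕ) : Fin (k + 1) → ℝ :=
  Pi.single 0 α + Pi.single (Fin.last k) β

lemma endpointVec_nonneg {k : ℕ} {α β : ℝ} (hα : 0 ≤ α) (hβ : 0 ≤ β) :
    0 ≤ endpointVec α β k :=
  add_nonneg (Pi.single_nonneg.2 hα) (Pi.single_nonneg.2 hβ)

lemma endpointVec_zero_pos {k : ℕ} {α β : ℝ} (hα : 0 < α) (hβ : 0 ≤ β) :
    0 < endpointVec α β k 0 := by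
  simp only [endpointVec, Pi.add_apply, Pi.single_apply, if_true]
  split_ifs <;> linarith

theorem stiffB_mulVec_one (k : ℕ) (K : Fin (k + 2) → ℝ) :
    stiffB (k + 1) K *ᵥ 1 = endpointVec (K 0) (K (Fin.last (k + 1))) k := by
  funext i
  rw [stiffB_eq_transpose_mul_diagonal_mul, ← mulVec_mulVec, ← mulVec_mulVec,
    transpose_diffMatrix_mulVec, mulVec_diagonal, mulVec_diagonal, diffMatrix_mulVec_one]
  simp [endpointVec, Pi.single_apply, Fin.succ_ne_zero, Fin.castSucc_ne_last]
  congr 1 <;> split_ifs with h <;> simp [h]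

section assocH

variable {n : ℕ} {m : Fin n → ℝ} {K : Fin (n + 1) → ℝ}

lemma assocH_apply (i j : Fin n) :
    assocH n m K i j = (√(m i))⁻¹ * stiffB n K i j * (√(m j))⁻¹ := by
  simp [assocH, mul_diagonal, diagonal_mul]

theorem memTA_assocH (hm : ∀ i, 0 < m i) (hK : ∀ j, 0 < K j) : MemTA (assocH n m K) := by
  have hd : ∀ i, 0 < (√(m i))⁻¹ := fun i => inv_pos.2 (Real.sqrt_pos.2 (hm i))
  have hpd : (assocH n m K).PosDef := by
    have hD : IsUnit (diagonal fun i => (√(m i))⁻¹) :=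
      isUnit_diagonal.2 (Pi.isUnit_iff.2 fun i => (hd i).ne'.isUnit)
    have := (IsUnit.posDef_star_left_conjugate_iff hD).2 (posDef_stiffB hK)
    rwa [star_eq_conjTranspose, diagonal_conjTranspose, star_trivial] at this
  have hsymm := isHermitian_iff_isSymm.1 hpd.isHermitian
  refine ⟨hsymm, fun i j h => ?_, fun i j h => ?_, hpd⟩
  · rw [assocH_apply, isTridiagonal_stiffB n K i j h, mul_zero, zero_mul]
  · wlog hij : (i : ℕ) + 1 = j generalizing i j
    · rw [← hsymm.apply i j]
      exact this j i h.symm (h.resolve_left hij)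
    rw [assocH_apply, stiffB_apply_of_val_add_one_eq K hij, mul_neg, neg_mul, neg_lt_zero]
    exact mul_pos (mul_pos (hd i) (hK _)) (hd j)

end assocH

section inverse

variable {k : ℕ}

theorem assocH_mulVec_sqrt {m : Fin (k + 1) → ℝ} (hm : ∀ i, 0 < m i) (K : Fin (k + 2) → ℝ) :
    assocH (k + 1) m K *ᵥ (fun i => √(m i)) =
      endpointVec (K 0 / √(m 0)) (K (Fin.last (k + 1)) / √(m (Fin.last k))) k := by
  have hD : (diagonal fun i => (√(m i))⁻¹) *ᵥ (fun i => √(m i)) = 1 := by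
    funext i
    simp [mulVec_diagonal, (Real.sqrt_pos.2 (hm i)).ne']
  rw [assocH, ← mulVec_mulVec, hD, ← mulVec_mulVec, stiffB_mulVec_one, endpointVec, endpointVec,
    mulVec_add, diagonal_mulVec_single, diagonal_mulVec_single, inv_mul_eq_div, inv_mul_eq_div]

/-- With `s = √m`, the spring constants are read off the two end conditions and the
superdiagonal of `H = M^{-1/2} B M^{-1/2}`: `K (i + 1) = - s i * H i (i + 1) * s (i + 1)`. -/
def springConsts (α β : ℝ) (H : Matrix (Fin (k + 1)) (Fin (k + 1)) ℝ) (s : Fin (k + 1) → ℝ) :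
    Fin (k + 2) → ℝ :=
  Fin.cons (α * s 0) <|
    Fin.snoc (fun i : Fin k => -(s i.castSucc * H i.castSucc i.succ * s i.succ))
      (β * s (Fin.last k))

noncomputable def springSystemOf (α β : ℝ) (H : Matrix (Fin (k + 1)) (Fin (k + 1)) ℝ) :
    (Fin (k + 1) → ℝ) × (Fin (k + 2) → ℝ) :=
  (fun i => (H⁻¹ *ᵥ endpointVec α β k) i ^ 2, springConsts α β H (H⁻¹ *ᵥ endpointVec α β k))

/-- The set `L_{α,β,k+1}`, with masses and springs indexed from `0`. -/
def springSystems (α β : ℝ) (k : ℕ) : Set ((Fin (k + 1) → ℝ) × (Fin (k + 2) → ℝ)) :=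
  {p | (∀ i, 0 < p.1 i) ∧ (∀ j, 0 < p.2 j) ∧ p.2 0 / √(p.1 0) = α ∧
    p.2 (Fin.last (k + 1)) / √(p.1 (Fin.last k)) = β}

theorem springConsts_pos {α β : ℝ} (hα : 0 < α) (hβ : 0 < β)
    {H : Matrix (Fin (k + 1)) (Fin (k + 1)) ℝ} (hH : MemTA H) {s : Fin (k + 1) → ℝ}
    (hs : ∀ i, 0 < s i) (j : Fin (k + 2)) : 0 < springConsts α β H s j := by
  induction j using Fin.cases with
  | zero => exact mul_pos hα (hs 0)
  | succ j =>
    induction j using Fin.lastCases with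
    | last => simpa [springConsts] using mul_pos hβ (hs _)
    | cast i =>
      have hsup : H i.castSucc i.succ < 0 := hH.2.2.1 _ _ (Or.inl (by simp))
      simpa [springConsts] using mul_neg_of_neg_of_pos (mul_neg_of_pos_of_neg (hs _) hsup) (hs _)

lemma MemTA.inv_mulVec_endpointVec_pos {α β : ℝ} (hα : 0 < α) (hβ : 0 < β)
    {H : Matrix (Fin (k + 1)) (Fin (k + 1)) ℝ} (hH : MemTA H) (i : Fin (k + 1)) :
    0 < (H⁻¹ *ᵥ endpointVec α β k) i := by
  refine hH.pos_of_mulVec_nonneg ?_ ?_ i <;> rw [hH.mulVec_inv_mulVec]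
  exacts [endpointVec_nonneg hα.le hβ.le, endpointVec_zero_pos hα hβ.le]

theorem mapsTo_assocH (α β : ℝ) :
    Set.MapsTo (fun p => assocH (k + 1) p.1 p.2) (springSystems α β k) {H | MemTA H} :=
  fun _ hp => memTA_assocH hp.1 hp.2.1

theorem mapsTo_springSystemOf {α β : ℝ} (hα : 0 < α) (hβ : 0 < β) :
    Set.MapsTo (springSystemOf α β) {H | MemTA H} (springSystems α β k) := by
  intro H hH
  have hs := hH.inv_mulVec_endpointVec_pos hα hβ
  refine ⟨fun i => pow_pos (hs i) 2, springConsts_pos hα hβ hH hs, ?_, ?_⟩ <;>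
    simp [springSystemOf, springConsts, Real.sqrt_sq (hs _).le, (hs _).ne']

theorem leftInvOn_springSystemOf (α β : ℝ) :
    Set.LeftInvOn (springSystemOf α β) (fun p => assocH (k + 1) p.1 p.2)
      (springSystems α β k) := by
  rintro ⟨m, K⟩ ⟨hm, hK, hα, hβ⟩
  dsimp only at hm hK hα hβ
  have hsqrt : (assocH (k + 1) m K)⁻¹ *ᵥ endpointVec α β k = fun i => √(m i) := by
    rw [← hα, ← hβ, ← assocH_mulVec_sqrt hm, (memTA_assocH hm hK).inv_mulVec_mulVec]
  have hm0 : ∀ i, √(m i) ≠ 0 := fun i => (Real.sqrt_pos.2 (hm i)).ne'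
  simp only [springSystemOf, hsqrt]
  refine Prod.ext (funext fun i => Real.sq_sqrt (hm i).le) (funext fun j => ?_)
  induction j using Fin.cases with
  | zero => simp [springConsts, ← hα, hm0]
  | succ j =>
    induction j using Fin.lastCases with
    | last => simp [springConsts, ← hβ, hm0]
    | cast i =>
      simp only [springConsts, Fin.cons_succ, Fin.snoc_castSucc]
      rw [assocH_apply, stiffB_apply_of_val_add_one_eq _ (by simp)]
      field_simp [hm0]

theorem rightInvOn_springSystemOf {α β : ℝ} (hα : 0 < α) (hβ : 0 < β) :
    Set.RightInvOn (springSystemOf α β) (fun p => assocH (k + 1) p.1 p.2) {H | MemTA H} := by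
  intro H hH
  have hs := hH.inv_mulVec_endpointVec_pos hα hβ
  set s := H⁻¹ *ᵥ endpointVec α β k
  have hsqrt : ∀ i, √(s i ^ 2) = s i := fun i => Real.sqrt_sq (hs i).le
  have hA := memTA_assocH (fun i => pow_pos (hs i) 2) (springConsts_pos hα hβ hH hs)
  refine hA.eq_of_mulVec_eq hH (fun i => ?_) (fun i => (hs i).ne') ?_
  · rw [assocH_apply, hsqrt, hsqrt, stiffB_apply_of_val_add_one_eq _ (by simp)]
    simp only [springConsts, Fin.cons_succ, Fin.snoc_castSucc]
    field_simp [(hs i.castSucc).ne', (hs i.succ).ne']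
  · have h := assocH_mulVec_sqrt (fun i => pow_pos (hs i) 2) (springConsts α β H s)
    simp only [hsqrt] at h
    rw [h, hH.mulVec_inv_mulVec]
    simp [springConsts, (hs 0).ne', (hs (Fin.last k)).ne']

end inverse

/-- The map sending a spring-mass system in `L_{α,β,n}` (positive masses and spring constants
with `K_1/√(m_1) = α`, `K_{n+1}/√(m_n) = β`) to its associated matrix is a bijection from
`L_{α,β,n}` onto `T_{A,n}`. -/
theorem assocH_bijOn (n : ℕ) (hn : 1 ≤ n) (α β : ℝ) (hα : 0 < α) (hβ : 0 < β) :
    Set.BijOn (fun p : (Fin n → ℝ) × (Fin (n + 1) → ℝ) => assocH n p.1 p.2)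
      {p : (Fin n → ℝ) × (Fin (n + 1) → ℝ) |
        (∀ i, 0 < p.1 i) ∧ (∀ j, 0 < p.2 j) ∧
        p.2 0 / Real.sqrt (p.1 ⟨0, by omega⟩) = α ∧
        p.2 (Fin.last n) / Real.sqrt (p.1 ⟨n - 1, by omega⟩) = β}
      {H : Matrix (Fin n) (Fin n) ℝ | MemTA H} := by
  obtain ⟨k, rfl⟩ := Nat.exists_eq_add_of_le' hn
  exact Set.InvOn.bijOn ⟨leftInvOn_springSystemOf α β, rightInvOn_springSystemOf hα hβ⟩
    (mapsTo_assocH α β) (mapsTo_springSystemOf hα hβ)
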